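/- arXiv:2602.09623 — 5 statements merged into one kernel-verified Lean document; each statement's English description precedes it below -/
import Mathlib

section
/- Let t ≥ 3 be an integer and let G be a finite simple block graph. Then the t-clique-free complex CF_t(G) is (t−2)-decomposable and hence shellable. -/
/-!
A vertex set is `t`-clique-free iff it meets every maximal clique `C` in at most `t - 1` vertices.
Complexes `{A ⊆ W | #(A ∩ C) ≤ b C for all C ∈ 𝓕}` are closed under deletion and link of a
vertex `x`: both replace `W` by `W \ {x}`, and the link also lowers by one the bounds of the `C ∋ x`.
If every subfamily of the traces `C ∩ W` has a leaf, a member `C` with a vertex `x` such that all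
other members meet `C` at most in `x`, then `x` is a shedding vertex whenever `C ∩ W` itself
violates the bound of `C`; so these complexes are vertex decomposable. For the maximal cliques of a
block graph such leaves exist: a longest Berge path ends in one, because the cliques of a Berge
cycle span a biconnected set, which lies in a block and so would be a single clique.
A shedding face `σ` glues shellings of the deletion and of the link into a shelling: first the
facets avoiding `σ`, then those containing it.
-/

/-- The `t`-clique-free complex of a graph `G`: faces are the finite vertex sets
containing no `t`-clique of `G`. -/
def cliqueFreeComplex {V : Type*} (G : SimpleGraph V) (t : ℕ) : Set (Finset V) :=
  {A : Finset V | ∀ B ⊆ A, ¬ G.IsNClique t B}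

/-- Deletion of a face from a simplicial complex: the faces not containing `σ`. -/
def delC {V : Type*} (Δ : Set (Finset V)) (σ : Finset V) : Set (Finset V) :=
  {F | F ∈ Δ ∧ ¬ σ ⊆ F}

/-- Link of a face in a simplicial complex. -/
def linkC {V : Type*} [DecidableEq V] (Δ : Set (Finset V)) (σ : Finset V) :
    Set (Finset V) :=
  {F | F ∈ Δ ∧ Disjoint F σ ∧ F ∪ σ ∈ Δ}

/-- A shedding face: a face `σ` such that for every face `τ ⊇ σ` and every `v ∈ σ`
there is a vertex `w ∉ τ` with `(τ ∪ {w}) \ {v}` a face. -/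
def IsSheddingFace {V : Type*} [DecidableEq V] (Δ : Set (Finset V)) (σ : Finset V) :
    Prop :=
  σ ∈ Δ ∧ ∀ τ ∈ Δ, σ ⊆ τ → ∀ v ∈ σ, ∃ w, w ∉ τ ∧ (insert w τ).erase v ∈ Δ

/-- A simplex: the void complex, or the full power set of a finite set
(this includes the irrelevant complex `{∅}`). -/
def IsSimplexComplex {V : Type*} (Δ : Set (Finset V)) : Prop :=
  Δ = ∅ ∨ ∃ F : Finset V, Δ = {A : Finset V | A ⊆ F}

/-- `k`-decomposability: `Δ` is a simplex, or has a shedding face `σ` with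
`dim σ ≤ k` (i.e. `σ.card ≤ k + 1`) whose deletion and link are `k`-decomposable. -/
inductive KDecomposable {V : Type*} [DecidableEq V] (k : ℕ) : Set (Finset V) → Prop
  | of_simplex {Δ : Set (Finset V)} (h : IsSimplexComplex Δ) : KDecomposable k Δ
  | of_shedding {Δ : Set (Finset V)} (σ : Finset V) (hshed : IsSheddingFace Δ σ)
      (hdim : σ.card ≤ k + 1) (hdel : KDecomposable k (delC Δ σ))
      (hlink : KDecomposable k (linkC Δ σ)) : KDecomposable k Δ

/-- The facets (maximal faces) of a simplicial complex. -/
def Facets {V : Type*} (Δ : Set (Finset V)) : Set (Finset V) :=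
  {F | F ∈ Δ ∧ ∀ A ∈ Δ, F ⊆ A → F = A}

/-- Shellability: the facets admit a linear order `F 0, …, F (s-1)` such that for all
`i < j` there are `v ∈ F j \ F i` and `l < j` with `F j \ F l = {v}`. -/
def IsShellable {V : Type*} [DecidableEq V] (Δ : Set (Finset V)) : Prop :=
  ∃ (s : ℕ) (F : Fin s → Finset V),
    (∀ i, F i ∈ Facets Δ) ∧ Function.Injective F ∧
    (∀ A ∈ Facets Δ, ∃ i, F i = A) ∧
    ∀ i j : Fin s, i < j →
      ∃ v ∈ F j \ F i, ∃ l, l < j ∧ F j \ F l = ({v} : Finset V)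

/-- A block of a graph `G`, described by its vertex set `B`: the induced subgraph on
`B` is connected, remains connected (preconnected) after removing any single vertex,
and `B` is maximal with these properties. -/
def IsBlockSet {V : Type*} (G : SimpleGraph V) (B : Set V) : Prop :=
  (G.induce B).Connected ∧
  (∀ v ∈ B, (G.induce (B \ {v})).Preconnected) ∧
  ∀ B' : Set V, B ⊆ B' → (G.induce B').Connected →
    (∀ v ∈ B', (G.induce (B' \ {v})).Preconnected) → B' = B

/-- A block graph: every block is a complete graph. -/
def IsBlockGraph {V : Type*} (G : SimpleGraph V) : Prop :=
  ∀ B : Set V, IsBlockSet G B → G.IsClique B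

open Finset

section SimplicialComplexes

variable {V : Type*} {Δ : Set (Finset V)} {σ F : Finset V}

lemma IsLowerSet.delC (hΔ : IsLowerSet Δ) (σ : Finset V) : IsLowerSet (delC Δ σ) :=
  fun _ _ hBA hA => ⟨hΔ hBA hA.1, fun hσ => hA.2 (hσ.trans hBA)⟩

lemma exists_facet_superset [Finite V] {A : Finset V} (hA : A ∈ Δ) :
    ∃ F ∈ Facets Δ, A ⊆ F := by
  obtain ⟨F, hAF, hF⟩ := Finite.exists_le_maximal (p := (· ∈ Δ)) hA
  exact ⟨F, ⟨hF.1, fun B hB hFB => hF.eq_of_le hB hFB⟩, hAF⟩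

lemma delC_eq_self_of_notMem (hΔ : IsLowerSet Δ) (hσ : σ ∉ Δ) : delC Δ σ = Δ :=
  Set.ext fun _ => ⟨And.left, fun hA => ⟨hA, fun h => hσ (hΔ h hA)⟩⟩

variable [DecidableEq V]

lemma IsLowerSet.linkC (hΔ : IsLowerSet Δ) (σ : Finset V) : IsLowerSet (linkC Δ σ) :=
  fun _ _ hBA hA =>
    ⟨hΔ hBA hA.1, hA.2.1.mono_left hBA, hΔ (union_subset_union_left hBA) hA.2.2⟩

lemma mem_facets_iff_forall_insert (hΔ : IsLowerSet Δ) :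
    F ∈ Facets Δ ↔ F ∈ Δ ∧ ∀ a ∉ F, insert a F ∉ Δ := by
  refine ⟨fun hF => ⟨hF.1, fun a ha haF => ha ?_⟩, fun hF => ⟨hF.1, fun A hA hFA => ?_⟩⟩
  · exact (hF.2 _ haF (subset_insert a F)) ▸ mem_insert_self a F
  · by_contra hne
    obtain ⟨a, haA, haF⟩ := exists_of_ssubset (hFA.ssubset_of_ne hne)
    exact hF.2 a haF (hΔ (insert_subset haA hFA) hA)

lemma facets_delC_iff (hΔ : IsLowerSet Δ) (hσ : IsSheddingFace Δ σ) :
    F ∈ Facets (delC Δ σ) ↔ F ∈ Facets Δ ∧ ¬σ ⊆ F := by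
  rw [mem_facets_iff_forall_insert (hΔ.delC σ), mem_facets_iff_forall_insert hΔ]
  refine ⟨fun ⟨⟨hF, hσF⟩, hmax⟩ => ⟨⟨hF, fun a haF haΔ => ?_⟩, hσF⟩,
    fun ⟨⟨hF, hmax⟩, hσF⟩ => ⟨⟨hF, hσF⟩, fun a haF ha => hmax a haF ha.1⟩⟩
  have hσa : σ ⊆ insert a F := not_not.1 fun h => hmax a haF ⟨haΔ, h⟩
  have haσ : a ∈ σ := by_contra fun h => hσF fun y hy =>
    (mem_insert.1 (hσa hy)).resolve_left fun hya => h (hya ▸ hy)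
  -- the shedding condition trades `a` for a new vertex `w`, giving a larger face avoiding `σ`
  obtain ⟨w, hw, hwΔ⟩ := hσ.2 _ haΔ hσa a haσ
  have haw : a ∉ insert w F := by
    rw [mem_insert, not_or]; exact ⟨fun h => hw (h ▸ mem_insert_self a F), haF⟩
  rw [insert_comm, erase_insert haw] at hwΔ
  exact hmax w (fun h => hw (mem_insert_of_mem h)) ⟨hwΔ, fun h => haw (h haσ)⟩

lemma union_mem_facets_of_mem_facets_linkC (hΔ : IsLowerSet Δ)
    (hF : F ∈ Facets (linkC Δ σ)) : F ∪ σ ∈ Facets Δ := by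
  rw [mem_facets_iff_forall_insert (hΔ.linkC σ)] at hF
  rw [mem_facets_iff_forall_insert hΔ]
  refine ⟨hF.1.2.2, fun a ha haΔ =>
    hF.2 a (fun h => ha (mem_union_left σ h)) ⟨?_, ?_, ?_⟩⟩
  · exact hΔ (insert_subset_insert a subset_union_left) haΔ
  · exact disjoint_insert_left.2 ⟨fun h => ha (mem_union_right F h), hF.1.2.1⟩
  · rwa [insert_union]

lemma sdiff_mem_facets_linkC (hΔ : IsLowerSet Δ) (hF : F ∈ Facets Δ) (hσ : σ ⊆ F) :
    F \ σ ∈ Facets (linkC Δ σ) := by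
  rw [mem_facets_iff_forall_insert hΔ] at hF
  rw [mem_facets_iff_forall_insert (hΔ.linkC σ)]
  refine ⟨⟨hΔ sdiff_subset hF.1, sdiff_disjoint, (sdiff_union_of_subset hσ).symm ▸ hF.1⟩,
    fun a ha haΔ => ?_⟩
  have haσ : a ∉ σ := disjoint_left.1 haΔ.2.1 (mem_insert_self a _)
  have haF := haΔ.2.2
  rw [insert_union, sdiff_union_of_subset hσ] at haF
  exact hF.2 a (fun h => ha (mem_sdiff.2 ⟨h, haσ⟩)) haF

def IsShellingOrder {s : ℕ} (F : Fin s → Finset V) : Prop :=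
  ∀ i j, i < j → ∃ v ∈ F j \ F i, ∃ l < j, F j \ F l = {v}

lemma IsShellingOrder.union_right {s : ℕ} {F : Fin s → Finset V} (hF : IsShellingOrder F)
    (hσ : ∀ i, Disjoint (F i) σ) : IsShellingOrder (fun i => F i ∪ σ) := by
  have key : ∀ i j, (F j ∪ σ) \ (F i ∪ σ) = F j \ F i := fun i j => by
    ext x
    have := @disjoint_left.1 (hσ j) x
    simp only [mem_sdiff, mem_union]
    tauto
  intro i j hij
  simpa only [key] using hF i j hij

lemma IsShellingOrder.append {s₁ s₂ : ℕ} {F₁ : Fin s₁ → Finset V}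
    {F₂ : Fin s₂ → Finset V} (h₁ : IsShellingOrder F₁) (h₂ : IsShellingOrder F₂)
    (h₁₂ : ∀ i j, ∃ v ∈ F₂ j \ F₁ i, ∃ l, F₂ j \ F₁ l = {v}) :
    IsShellingOrder (Fin.append F₁ F₂) := by
  intro i j hij
  induction j using Fin.addCases with
  | left j =>
    induction i using Fin.addCases with
    | left i =>
      obtain ⟨v, hv, l, hl, h⟩ := h₁ i j hij
      exact ⟨v, by simpa using hv, Fin.castAdd s₂ l, hl, by simpa using h⟩
    | right i => exact absurd hij (by simp [Fin.lt_def]; omega)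
  | right j =>
    induction i using Fin.addCases with
    | left i =>
      obtain ⟨v, hv, l, h⟩ := h₁₂ i j
      exact ⟨v, by simpa using hv, Fin.castAdd s₂ l, by simp [Fin.lt_def]; omega,
        by simpa using h⟩
    | right i =>
      obtain ⟨v, hv, l, hl, h⟩ := h₂ i j (by simpa using hij)
      exact ⟨v, by simpa using hv, Fin.natAdd s₁ l, by simpa using hl, by simpa using h⟩

lemma exists_facet_delC_sdiff_eq_singleton [Finite V] (hΔ : IsLowerSet Δ)
    (hσ : IsSheddingFace Δ σ) {τ : Finset V} (hτ : τ ∈ Facets Δ) (hστ : σ ⊆ τ)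
    (hσF : ¬σ ⊆ F) :
    ∃ v ∈ τ \ F, ∃ H ∈ Facets (delC Δ σ), τ \ H = {v} := by
  obtain ⟨v, hvσ, hvF⟩ := not_subset.1 hσF
  obtain ⟨w, hw, hwΔ⟩ := hσ.2 τ hτ.1 hστ v hvσ
  obtain ⟨H, hH, hwH⟩ := exists_facet_superset hwΔ
  have hvτ : v ∈ τ := hστ hvσ
  have hvH : v ∉ H := fun hvH => by
    have hτH : insert w τ ⊆ H := by
      rw [← insert_erase (mem_insert_of_mem hvτ)]; exact insert_subset hvH hwH
    exact hw ((hτ.2 H hH.1 ((subset_insert w τ).trans hτH)) ▸ hτH (mem_insert_self w τ))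
  refine ⟨v, mem_sdiff.2 ⟨hvτ, hvF⟩, H,
    (facets_delC_iff hΔ hσ).2 ⟨hH, fun h => hvH (h hvσ)⟩,
    eq_singleton_iff_unique_mem.2 ⟨mem_sdiff.2 ⟨hvτ, hvH⟩, fun y hy => ?_⟩⟩
  by_contra hyv
  exact (mem_sdiff.1 hy).2 (hwH (mem_erase.2 ⟨hyv, mem_insert_of_mem (mem_sdiff.1 hy).1⟩))

lemma isShellable_of_isSheddingFace [Finite V] (hΔ : IsLowerSet Δ) (hσ : IsSheddingFace Δ σ)
    (hdel : IsShellable (delC Δ σ)) (hlink : IsShellable (linkC Δ σ)) : IsShellable Δ := by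
  obtain ⟨s₁, F₁, hF₁, hinj₁, hsurj₁, hord₁⟩ := hdel
  obtain ⟨s₂, F₂, hF₂, hinj₂, hsurj₂, hord₂⟩ := hlink
  have hF₁' i := (facets_delC_iff hΔ hσ).1 (hF₁ i)
  have hF₂' i := union_mem_facets_of_mem_facets_linkC hΔ (hF₂ i)
  have hdisj i : Disjoint (F₂ i) σ := (hF₂ i).1.2.1
  refine ⟨s₁ + s₂, Fin.append F₁ (fun j => F₂ j ∪ σ), ?_, ?_, ?_, ?_⟩
  · intro i
    induction i using Fin.addCases <;> simp [hF₁', hF₂']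
  · refine Fin.append_injective_iff.2 ⟨hinj₁, fun i j h => hinj₂ ?_, fun i j h => ?_⟩
    · simpa [union_sdiff_cancel_right (hdisj _)] using congr_arg (· \ σ) h
    · exact (hF₁' i).2 (h ▸ subset_union_right)
  · intro A hA
    by_cases hσA : σ ⊆ A
    · obtain ⟨j, hj⟩ := hsurj₂ _ (sdiff_mem_facets_linkC hΔ hA hσA)
      exact ⟨Fin.natAdd s₁ j, by simp [hj, sdiff_union_of_subset hσA]⟩
    · obtain ⟨i, hi⟩ := hsurj₁ A ((facets_delC_iff hΔ hσ).2 ⟨hA, hσA⟩)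
      exact ⟨Fin.castAdd s₂ i, by simp [hi]⟩
  · refine IsShellingOrder.append hord₁ (IsShellingOrder.union_right hord₂ hdisj) fun i j => ?_
    obtain ⟨v, hv, H, hH, h⟩ :=
      exists_facet_delC_sdiff_eq_singleton hΔ hσ (hF₂' j) subset_union_right (hF₁' i).2
    obtain ⟨l, rfl⟩ := hsurj₁ H hH
    exact ⟨v, hv, l, h⟩

lemma IsSimplexComplex.isShellable (h : IsSimplexComplex Δ) : IsShellable Δ := by
  rcases h with rfl | ⟨F, rfl⟩
  · exact ⟨0, Fin.elim0, fun i => i.elim0, fun i => i.elim0, fun A hA => hA.1.elim,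
      fun i => i.elim0⟩
  · refine ⟨1, fun _ => F, fun _ => ⟨subset_refl F, fun A hA hFA => subset_antisymm hFA hA⟩,
      fun _ _ _ => Subsingleton.elim _ _, fun A hA => ⟨0, (hA.2 F (subset_refl F) hA.1).symm⟩,
      fun i j hij => absurd hij (by omega)⟩

theorem KDecomposable.isShellable [Finite V] {k : ℕ} (h : KDecomposable k Δ)
    (hΔ : IsLowerSet Δ) : IsShellable Δ := by
  induction h with
  | of_simplex h => exact h.isShellable
  | of_shedding σ hσ _ _ _ ihdel ihlink =>
    exact isShellable_of_isSheddingFace hΔ hσ (ihdel (hΔ.delC σ)) (ihlink (hΔ.linkC σ))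

end SimplicialComplexes

section Leaves

variable {V : Type*}

structure IsBergePath (𝓖 : Finset (Finset V)) (m : ℕ) (E : ℕ → Finset V) (u : ℕ → V) :
    Prop where
  mem : ∀ i ≤ m, E i ∈ 𝓖
  injective_edges : ∀ i ≤ m, ∀ j ≤ m, E i = E j → i = j
  mem_left : ∀ i < m, u i ∈ E i
  mem_right : ∀ i < m, u i ∈ E (i + 1)
  injective_vertices : ∀ i < m, ∀ j < m, u i = u j → i = j

/-- A Berge cycle `E 0, u 0, E 1, …, u (m - 1), E m, y, E 0` through `m + 1 ≥ 2` sets. -/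
def IsBergeCycle (𝓖 : Finset (Finset V)) (m : ℕ) (E : ℕ → Finset V) (u : ℕ → V)
    (y : V) : Prop :=
  IsBergePath 𝓖 m E u ∧ 0 < m ∧ y ∈ E 0 ∧ y ∈ E m ∧ ∀ i < m, u i ≠ y

variable {𝓖 : Finset (Finset V)} {m : ℕ} {E : ℕ → Finset V} {u : ℕ → V}

lemma IsBergePath.succ_le_card (h : IsBergePath 𝓖 m E u) : m + 1 ≤ #𝓖 := by
  simpa using card_le_card_of_injOn E (s := range (m + 1))
    (fun i hi => h.mem i (Nat.lt_succ_iff.1 (mem_range.1 hi)))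
    (fun i hi j hj => h.injective_edges i (Nat.lt_succ_iff.1 (mem_range.1 hi))
      j (Nat.lt_succ_iff.1 (mem_range.1 hj)))

lemma IsBergePath.snoc (h : IsBergePath 𝓖 m E u) {D : Finset V} {y : V} (hD : D ∈ 𝓖)
    (hDE : ∀ i ≤ m, E i ≠ D) (hyE : y ∈ E m) (hyD : y ∈ D) (hyu : ∀ i < m, u i ≠ y) :
    IsBergePath 𝓖 (m + 1) (fun i => if i = m + 1 then D else E i)
      (fun i => if i = m then y else u i) where
  mem i hi := by
    split_ifs with h'
    exacts [hD, h.mem i (by omega)]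
  injective_edges i hi j hj hij := by
    split_ifs at hij with h₁ h₂ h₂
    · omega
    · exact absurd hij.symm (hDE j (by omega))
    · exact absurd hij (hDE i (by omega))
    · exact h.injective_edges i (by omega) j (by omega) hij
  mem_left i hi := by
    split_ifs with h₁ h₂ h₂
    · omega
    · omega
    · exact h₂ ▸ hyE
    · exact h.mem_left i (by omega)
  mem_right i hi := by
    split_ifs with h₁ h₂ h₂
    · exact hyD
    · omega
    · omega
    · exact h.mem_right i (by omega)
  injective_vertices i hi j hj hij := by
    split_ifs at hij with h₁ h₂ h₂
    · omega
    · exact absurd hij.symm (hyu j (by omega))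
    · exact absurd hij (hyu i (by omega))
    · exact h.injective_vertices i (by omega) j (by omega) hij

lemma IsBergePath.isBergeCycle_drop (h : IsBergePath 𝓖 m E u) {j : ℕ} {y : V} (hj : j < m)
    (hyj : y ∈ E j) (hym : y ∈ E m) (hyu : ∀ i, j ≤ i → i < m → u i ≠ y) :
    IsBergeCycle 𝓖 (m - j) (fun i => E (j + i)) (fun i => u (j + i)) y := by
  refine ⟨⟨fun i hi => h.mem _ (by omega), fun i hi i' hi' hii' => ?_,
    fun i hi => h.mem_left (j + i) (by omega), fun i hi => h.mem_right (j + i) (by omega),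
    fun i hi i' hi' hii' => ?_⟩, by omega, hyj, by simpa [Nat.add_sub_cancel' hj.le] using hym,
    fun i hi => hyu _ (by omega) (by omega)⟩
  · have := h.injective_edges _ (by omega) _ (by omega) hii'; omega
  · have := h.injective_vertices _ (by omega) _ (by omega) hii'; omega

variable [DecidableEq V]

def IsLeaf (𝓖 : Finset (Finset V)) (C : Finset V) (x : V) : Prop :=
  C ∈ 𝓖 ∧ x ∈ C ∧ ∀ D ∈ 𝓖, D ≠ C → D ∩ C ⊆ {x}

def LeafHereditary (𝓕 : Finset (Finset V)) : Prop :=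
  ∀ 𝓖 ⊆ 𝓕, 𝓖.Nonempty → (∀ C ∈ 𝓖, C.Nonempty) → ∃ C x, IsLeaf 𝓖 C x

lemma LeafHereditary.image_inter {𝓕 : Finset (Finset V)} (h𝓕 : LeafHereditary 𝓕)
    (S : Finset V) : LeafHereditary (𝓕.image (· ∩ S)) := by
  intro 𝓖' h𝓖' hne hmem
  obtain ⟨C, x, hC, hxC, hleaf⟩ := h𝓕 (𝓕.filter (· ∩ S ∈ 𝓖')) (filter_subset _ _)
    (by
      obtain ⟨D, hD⟩ := hne
      obtain ⟨C, hC, rfl⟩ := mem_image.1 (h𝓖' hD)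
      exact ⟨C, mem_filter.2 ⟨hC, hD⟩⟩)
    (fun C hC => (hmem _ (mem_filter.1 hC).2).mono inter_subset_left)
  have hCS : C ∩ S ∈ 𝓖' := (mem_filter.1 hC).2
  -- if the leaf vertex `x` is cut away by `S`, the trace `C ∩ S` meets no other trace at all
  obtain ⟨x', hx', hxx'⟩ : ∃ x' ∈ C ∩ S, x ∈ S → x' = x := by
    by_cases hxS : x ∈ S
    · exact ⟨x, mem_inter.2 ⟨hxC, hxS⟩, fun _ => rfl⟩
    · obtain ⟨x', hx'⟩ := hmem _ hCS
      exact ⟨x', hx', fun h => absurd h hxS⟩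
  refine ⟨C ∩ S, x', hCS, hx', fun D hD hDC y hy => ?_⟩
  obtain ⟨C', hC', rfl⟩ := mem_image.1 (h𝓖' hD)
  have hC'C : C' ≠ C := fun h => hDC (h ▸ rfl)
  simp only [mem_inter] at hy
  have hyx := mem_singleton.1 <|
    hleaf C' (mem_filter.2 ⟨hC', hD⟩) hC'C (mem_inter.2 ⟨hy.1.1, hy.2.1⟩)
  rw [mem_singleton, hyx, hxx' (hyx ▸ hy.1.2)]

/-- The last set of a longest Berge path is a leaf: another set meeting it away from the last
link vertex would close a Berge cycle or extend the path. -/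
lemma exists_isLeaf_of_forall_not_isBergeCycle (hne : 𝓖.Nonempty)
    (hmem : ∀ C ∈ 𝓖, C.Nonempty) (hcyc : ∀ m E u y, ¬IsBergeCycle 𝓖 m E u y) :
    ∃ C x, IsLeaf 𝓖 C x := by
  classical
  obtain ⟨C₀, hC₀⟩ := hne
  obtain ⟨x₀, -⟩ := hmem C₀ hC₀
  let P m := ∃ (E : ℕ → Finset V) (u : ℕ → V), IsBergePath 𝓖 m E u
  have hP0 : P 0 := ⟨fun _ => C₀, fun _ => x₀, fun _ _ => hC₀, fun i hi j hj _ => by omega,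
    fun _ h => absurd h (Nat.not_lt_zero _), fun _ h => absurd h (Nat.not_lt_zero _),
    fun _ h => absurd h (Nat.not_lt_zero _)⟩
  obtain ⟨E, u, hpath⟩ := Nat.findGreatest_spec (Nat.zero_le #𝓖) hP0
  set m := Nat.findGreatest P #𝓖
  have hlongest : ¬P (m + 1) := fun hP => by
    obtain ⟨_, _, h⟩ := id hP
    have := h.succ_le_card
    have := Nat.le_findGreatest (P := P) (by omega : m + 1 ≤ #𝓖) hP
    omega
  obtain ⟨x, hxE, hxu⟩ : ∃ x ∈ E m, ∀ i < m, i + 1 = m → u i = x := by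
    rcases Nat.eq_zero_or_pos m with hm | hm
    · obtain ⟨x, hx⟩ := hmem _ (hpath.mem m le_rfl)
      exact ⟨x, hx, fun i hi => absurd hi (by omega)⟩
    · refine ⟨u (m - 1), ?_, fun i _ hi => by rw [← hi, Nat.add_sub_cancel]⟩
      simpa [Nat.sub_add_cancel hm] using hpath.mem_right (m - 1) (by omega)
  refine ⟨E m, x, hpath.mem m le_rfl, hxE, fun D hD hDE y hy => mem_singleton.2 ?_⟩
  by_contra hyx
  obtain ⟨hyD, hyE⟩ := mem_inter.1 hy
  by_cases hyu : ∃ j < m, u j = y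
  · obtain ⟨j, hj, rfl⟩ := hyu
    have hj' : j + 1 < m := by
      by_contra h
      exact hyx (hxu j hj (by omega))
    refine hcyc _ _ _ _ (hpath.isBergeCycle_drop hj' (hpath.mem_right j hj) hyE fun i hi _ h => ?_)
    have := hpath.injective_vertices i (by omega) j hj h
    omega
  push Not at hyu
  by_cases hDE' : ∃ j ≤ m, E j = D
  · obtain ⟨j, hj, rfl⟩ := hDE'
    have hjm : j < m := lt_of_le_of_ne hj fun h => hDE (h ▸ rfl)
    exact hcyc _ _ _ _ (hpath.isBergeCycle_drop hjm hyD hyE fun i _ hi => hyu i hi)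
  push Not at hDE'
  exact hlongest ⟨_, _, hpath.snoc hD hDE' hyE hyD hyu⟩

end Leaves

section MeetBounded

variable {V : Type*} [DecidableEq V]

lemma card_erase_insert_inter_le {s t : Finset V} {w x : V} (hx : x ∈ s)
    (hwx : w ∈ t → x ∈ t) :
    #((insert w s).erase x ∩ t) ≤ #(s ∩ t) := by
  rw [erase_inter]
  by_cases hw : w ∈ t
  · rw [insert_inter_of_mem hw,
      card_erase_of_mem (mem_insert_of_mem (mem_inter.2 ⟨hx, hwx hw⟩))]
    have := card_insert_le w (s ∩ t)
    omega
  · rw [insert_inter_of_notMem hw]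
    exact card_erase_le

def meetBoundedComplex (𝓕 : Finset (Finset V)) (b : Finset V → ℕ) (W : Finset V) :
    Set (Finset V) :=
  {A | A ⊆ W ∧ ∀ C ∈ 𝓕, #(A ∩ C) ≤ b C}

def activeTraces (𝓕 : Finset (Finset V)) (b : Finset V → ℕ) (W : Finset V) :
    Finset (Finset V) :=
  (𝓕.filter fun C => b C < #(C ∩ W)).image (· ∩ W)

variable {𝓕 : Finset (Finset V)} {b : Finset V → ℕ} {W : Finset V} {x : V}

lemma isLowerSet_meetBoundedComplex : IsLowerSet (meetBoundedComplex 𝓕 b W) :=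
  fun _ _ hBA hA => ⟨hBA.trans hA.1,
    fun C hC => (card_le_card (inter_subset_inter_right hBA)).trans (hA.2 C hC)⟩

lemma meetBoundedComplex_eq_of_forall_le (h : ∀ C ∈ 𝓕, #(C ∩ W) ≤ b C) :
    meetBoundedComplex 𝓕 b W = {A | A ⊆ W} :=
  Set.ext fun A => ⟨And.left, fun hA => ⟨hA, fun C hC =>
    (card_le_card (inter_comm A C ▸ inter_subset_inter_left hA)).trans (h C hC)⟩⟩

lemma delC_meetBoundedComplex_singleton :
    delC (meetBoundedComplex 𝓕 b W) {x} = meetBoundedComplex 𝓕 b (W.erase x) := by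
  ext A
  simp only [delC, meetBoundedComplex, Set.mem_ofPred_eq, singleton_subset_iff,
    subset_erase]
  tauto

lemma linkC_meetBoundedComplex_singleton (hx : {x} ∈ meetBoundedComplex 𝓕 b W) :
    linkC (meetBoundedComplex 𝓕 b W) {x} =
      meetBoundedComplex 𝓕 (fun C => if x ∈ C then b C - 1 else b C) (W.erase x) := by
  ext A
  simp only [linkC, meetBoundedComplex, Set.mem_ofPred_eq, disjoint_singleton_right,
    subset_erase, union_singleton, insert_subset_iff]
  have hxW : x ∈ W := singleton_subset_iff.1 hx.1
  have hcard : ∀ C ∈ 𝓕, x ∉ A →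
      (#(insert x A ∩ C) ≤ b C ↔ #(A ∩ C) ≤ if x ∈ C then b C - 1 else b C) := by
    intro C hC hxA
    by_cases hxC : x ∈ C
    · have hb : 1 ≤ b C := by simpa [singleton_inter_of_mem hxC] using hx.2 C hC
      rw [insert_inter_of_mem hxC, card_insert_of_notMem (fun h => hxA (mem_inter.1 h).1),
        if_pos hxC]
      omega
    · rw [insert_inter_of_notMem hxC, if_neg hxC]
  constructor
  · rintro ⟨-, hxA, ⟨-, hAW⟩, hAx⟩
    exact ⟨⟨hAW, hxA⟩, fun C hC => (hcard C hC hxA).1 (hAx C hC)⟩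
  · rintro ⟨⟨hAW, hxA⟩, hA⟩
    have hAx C (hC : C ∈ 𝓕) : #(insert x A ∩ C) ≤ b C := (hcard C hC hxA).2 (hA C hC)
    exact ⟨⟨hAW, fun C hC => (card_le_card (inter_subset_inter_right (subset_insert x A))).trans
      (hAx C hC)⟩, hxA, ⟨hxW, hAW⟩, hAx⟩

lemma isSheddingFace_singleton_of_isLeaf (hx : {x} ∈ meetBoundedComplex 𝓕 b W) {C : Finset V}
    (hleaf : IsLeaf (activeTraces 𝓕 b W) C x) :
    IsSheddingFace (meetBoundedComplex 𝓕 b W) {x} := by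
  obtain ⟨hC, hxC, hleaf⟩ := hleaf
  obtain ⟨C₀, hC₀, rfl⟩ := mem_image.1 hC
  obtain ⟨hC₀𝓕, hC₀b⟩ := mem_filter.1 hC₀
  refine ⟨hx, fun τ hτ hxτ v hv => ?_⟩
  rw [mem_singleton.1 hv]
  have hxτ : x ∈ τ := singleton_subset_iff.1 hxτ
  obtain ⟨w, hwC, hwτ⟩ : ∃ w ∈ C₀ ∩ W, w ∉ τ := by
    by_contra! h
    have : C₀ ∩ W ⊆ τ ∩ C₀ := fun y hy => mem_inter.2 ⟨h y hy, (mem_inter.1 hy).1⟩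
    exact absurd ((card_le_card this).trans (hτ.2 C₀ hC₀𝓕)) (not_le.2 hC₀b)
  refine ⟨w, hwτ, fun y hy => ?_, fun D hD => ?_⟩
  · rcases mem_insert.1 (mem_of_mem_erase hy) with rfl | hy
    exacts [(mem_inter.1 hwC).2, hτ.1 hy]
  by_cases hDb : b D < #(D ∩ W)
  · refine (card_erase_insert_inter_le hxτ fun hwD => ?_).trans (hτ.2 D hD)
    by_contra hxD
    have hDC : D ∩ W ≠ C₀ ∩ W := fun h => hxD (mem_inter.1 (h ▸ hxC)).1
    have hwx : w = x := mem_singleton.1 <| hleaf _ (mem_image_of_mem _ (mem_filter.2 ⟨hD, hDb⟩))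
      hDC (mem_inter.2 ⟨mem_inter.2 ⟨hwD, (mem_inter.1 hwC).2⟩, hwC⟩)
    exact hwτ (hwx ▸ hxτ)
  · refine (card_le_card fun y hy => ?_).trans (not_lt.1 hDb)
    obtain ⟨hy, hyD⟩ := mem_inter.1 hy
    rcases mem_insert.1 (mem_of_mem_erase hy) with rfl | hy
    exacts [mem_inter.2 ⟨hyD, (mem_inter.1 hwC).2⟩, mem_inter.2 ⟨hyD, hτ.1 hy⟩]

theorem kDecomposable_meetBoundedComplex (h𝓕 : LeafHereditary 𝓕) (k : ℕ)
    (b : Finset V → ℕ) (W : Finset V) : KDecomposable k (meetBoundedComplex 𝓕 b W) := by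
  induction W using Finset.strongInduction generalizing b with
  | H W ih =>
  by_cases hloop : ∃ x ∈ W, {x} ∉ meetBoundedComplex 𝓕 b W
  · obtain ⟨x, hxW, hx⟩ := hloop
    rw [← delC_eq_self_of_notMem isLowerSet_meetBoundedComplex hx,
      delC_meetBoundedComplex_singleton]
    exact ih _ (erase_ssubset hxW) b
  push Not at hloop
  by_cases hact : ∃ C ∈ 𝓕, b C < #(C ∩ W)
  · obtain ⟨C₀, hC₀, hC₀b⟩ := hact
    obtain ⟨C, x, hleaf⟩ := h𝓕.image_inter W (activeTraces 𝓕 b W)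
      (image_subset_image (filter_subset _ _))
      ⟨_, mem_image_of_mem _ (mem_filter.2 ⟨hC₀, hC₀b⟩)⟩
      (fun C hC => by
        obtain ⟨C', hC', rfl⟩ := mem_image.1 hC
        exact card_pos.1 (Nat.zero_lt_of_lt (mem_filter.1 hC').2))
    have hxW : x ∈ W := by
      obtain ⟨C', -, rfl⟩ := mem_image.1 hleaf.1
      exact (mem_inter.1 hleaf.2.1).2
    have hx := hloop x hxW
    refine .of_shedding {x} (isSheddingFace_singleton_of_isLeaf hx hleaf) (by simp) ?_ ?_
    · rw [delC_meetBoundedComplex_singleton]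
      exact ih _ (erase_ssubset hxW) b
    · rw [linkC_meetBoundedComplex_singleton hx]
      exact ih _ (erase_ssubset hxW) _
  · push Not at hact
    exact .of_simplex (Or.inr ⟨W, meetBoundedComplex_eq_of_forall_le hact⟩)

end MeetBounded

section BlockGraphs

variable {V : Type*} {G : SimpleGraph V}

lemma IsBlockGraph.isClique_of_biconnected [Finite V] (hG : IsBlockGraph G) {U : Set V}
    (hU : (G.induce U).Connected) (hU' : ∀ v ∈ U, (G.induce (U \ {v})).Preconnected) :
    G.IsClique U := by
  obtain ⟨B, hUB, hB⟩ := Finite.exists_le_maximal (p := fun B : Set V =>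
    (G.induce B).Connected ∧ ∀ v ∈ B, (G.induce (B \ {v})).Preconnected) ⟨hU, hU'⟩
  have hblock : IsBlockSet G B :=
    ⟨hB.1.1, hB.1.2, fun B' hBB' h₁ h₂ => (hB.eq_of_le ⟨h₁, h₂⟩ hBB').symm⟩
  exact (hG B hblock).subset hUB

lemma SimpleGraph.IsClique.induce_preconnected {s : Set V} (h : G.IsClique s) :
    (G.induce s).Preconnected :=
  SimpleGraph.induce_eq_top.2 h ▸ SimpleGraph.preconnected_top

lemma preconnected_biUnion_of_chain {S : ℕ → Set V} (n : ℕ)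
    (hS : ∀ i ≤ n, (G.induce (S i)).Preconnected)
    (hlink : ∀ i < n, (S i ∩ S (i + 1)).Nonempty) :
    (G.induce (⋃ i ≤ n, S i)).Preconnected := by
  induction n with
  | zero =>
    rw [show (⋃ i ≤ 0, S i) = S 0 by simp]
    exact hS 0 le_rfl
  | succ n ih =>
    rw [Set.biUnion_le_succ]
    obtain ⟨x, hxn, hx⟩ := hlink n n.lt_succ_self
    exact (SimpleGraph.induce_union_connected (ih (fun i hi => hS i (by omega))
      (fun i hi => hlink i (by omega))) (hS _ le_rfl)
      ⟨x, Set.mem_biUnion (le_refl n) hxn, hx⟩).preconnected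

lemma preconnected_biUnion_cliques_diff {E : ℕ → Finset V} {u : ℕ → V} {R : Set V} (n : ℕ)
    (hE : ∀ i ≤ n, G.IsClique (E i : Set V))
    (hu : ∀ i < n, u i ∈ E i ∧ u i ∈ E (i + 1) ∧ u i ∉ R) :
    (G.induce (⋃ i ≤ n, (E i : Set V) \ R)).Preconnected :=
  preconnected_biUnion_of_chain n
    (fun i hi => ((hE i hi).subset Set.sdiff_subset).induce_preconnected)
    fun i hi => ⟨u i, ⟨(hu i hi).1, (hu i hi).2.2⟩, (hu i hi).2.1, (hu i hi).2.2⟩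

variable [DecidableEq V] {𝓖 : Finset (Finset V)} {m : ℕ} {E : ℕ → Finset V} {u : ℕ → V}
  {y : V}

lemma IsBergeCycle.preconnected_diff (hcyc : IsBergeCycle 𝓖 m E u y)
    (hE : ∀ i ≤ m, G.IsClique (E i : Set V)) (v : V) :
    (G.induce ((⋃ i ≤ m, (E i : Set V)) \ {v})).Preconnected := by
  obtain ⟨hpath, hm, hy0, hym, hyu⟩ := hcyc
  by_cases hv : ∃ k < m, u k = v
  · -- removing the link `u k` leaves the chains `E 0 … E k` and `E (k+1) … E m`, joined by `y`
    obtain ⟨k, hk, rfl⟩ := hv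
    have hsplit : (⋃ i ≤ m, (E i : Set V)) \ {u k} =
        (⋃ i ≤ k, (E i : Set V) \ {u k}) ∪
          ⋃ i ≤ m - (k + 1), (E (k + 1 + i) : Set V) \ {u k} := by
      ext a
      simp only [Set.mem_sdiff, Set.mem_iUnion, Set.mem_union, exists_prop]
      constructor
      · rintro ⟨⟨i, hi, ha⟩, hav⟩
        by_cases hik : i ≤ k
        · exact Or.inl ⟨i, hik, ha, hav⟩
        · exact Or.inr ⟨i - (k + 1), by omega, by rwa [Nat.add_sub_cancel' (by omega)], hav⟩
      · rintro (⟨i, hi, ha, hav⟩ | ⟨i, hi, ha, hav⟩)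
        exacts [⟨⟨i, by omega, ha⟩, hav⟩, ⟨⟨k + 1 + i, by omega, ha⟩, hav⟩]
    have hlink i (hi : i < m) (hik : i ≠ k) : u i ∉ ({u k} : Set V) := fun h =>
      hik (hpath.injective_vertices i hi k hk h)
    rw [hsplit]
    refine (SimpleGraph.induce_union_connected
      (preconnected_biUnion_cliques_diff k (fun i hi => hE i (by omega))
        fun i hi => ⟨hpath.mem_left i (by omega), hpath.mem_right i (by omega),
          hlink i (by omega) (by omega)⟩)
      (preconnected_biUnion_cliques_diff (u := fun i => u (k + 1 + i)) _
        (fun i hi => hE _ (by omega))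
        fun i hi => ⟨hpath.mem_left _ (by omega), hpath.mem_right (k + 1 + i) (by omega),
          hlink _ (by omega) (by omega)⟩)
      ⟨y, Set.mem_biUnion (Nat.zero_le k) ⟨hy0, (hyu k hk).symm⟩, ?_⟩).preconnected
    refine Set.mem_biUnion (le_refl (m - (k + 1))) ⟨?_, (hyu k hk).symm⟩
    rwa [Nat.add_sub_cancel' (by omega)]
  · push Not at hv
    rw [show (⋃ i ≤ m, (E i : Set V)) \ {v} = ⋃ i ≤ m, (E i : Set V) \ {v} by
      simp only [Set.iUnion_sdiff]]
    exact preconnected_biUnion_cliques_diff m hE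
      fun i hi => ⟨hpath.mem_left i hi, hpath.mem_right i hi, hv i hi⟩

theorem IsBlockGraph.not_isBergeCycle [Finite V] (hG : IsBlockGraph G)
    (h𝓖 : ∀ C ∈ 𝓖, Maximal (fun s : Finset V => G.IsClique (s : Set V)) C) :
    ¬IsBergeCycle 𝓖 m E u y := by
  intro hcyc
  have hpath := hcyc.1
  have hE i (hi : i ≤ m) : G.IsClique (E i : Set V) := (h𝓖 _ (hpath.mem i hi)).1
  have hU : G.IsClique (⋃ i ≤ m, (E i : Set V)) := by
    refine hG.isClique_of_biconnected ((SimpleGraph.connected_iff _).2 ⟨?_, ?_⟩)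
      fun v _ => hcyc.preconnected_diff hE v
    · rw [show (⋃ i ≤ m, (E i : Set V)) = ⋃ i ≤ m, (E i : Set V) \ ∅ by simp]
      exact preconnected_biUnion_cliques_diff m hE
        fun i hi => ⟨hpath.mem_left i hi, hpath.mem_right i hi, Set.notMem_empty _⟩
    · exact ⟨⟨y, Set.mem_biUnion (Nat.zero_le m) hcyc.2.2.1⟩⟩
  have h01 : G.IsClique ((E 0 ∪ E 1 : Finset V) : Set V) := hU.subset <| by
    rw [coe_union]
    exact Set.union_subset (Set.subset_biUnion_of_mem (u := fun i => (E i : Set V)) (Nat.zero_le m))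
      (Set.subset_biUnion_of_mem (u := fun i => (E i : Set V)) hcyc.2.1)
  have h0 := (h𝓖 _ (hpath.mem 0 (Nat.zero_le m))).eq_of_le h01 subset_union_left
  have h1 := (h𝓖 _ (hpath.mem 1 hcyc.2.1)).eq_of_le (h𝓖 _ (hpath.mem 0 (Nat.zero_le m))).1
    (h0 ▸ subset_union_right)
  exact absurd (hpath.injective_edges 1 hcyc.2.1 0 (Nat.zero_le m) h1) one_ne_zero

lemma IsBlockGraph.leafHereditary [Finite V] (hG : IsBlockGraph G) {𝓜 : Finset (Finset V)}
    (h𝓜 : ∀ C ∈ 𝓜, Maximal (fun s : Finset V => G.IsClique (s : Set V)) C) :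
    LeafHereditary 𝓜 :=
  fun _ h𝓖 hne hmem => exists_isLeaf_of_forall_not_isBergeCycle hne hmem fun _ _ _ _ =>
    hG.not_isBergeCycle fun C hC => h𝓜 C (h𝓖 hC)

lemma cliqueFreeComplex_eq_meetBoundedComplex [Fintype V] {t : ℕ} (ht : 1 ≤ t)
    {𝓜 : Finset (Finset V)}
    (h𝓜 : ∀ C, C ∈ 𝓜 ↔ Maximal (fun s : Finset V => G.IsClique (s : Set V)) C) :
    cliqueFreeComplex G t = meetBoundedComplex 𝓜 (fun _ => t - 1) univ := by
  ext A
  simp only [cliqueFreeComplex, meetBoundedComplex, Set.mem_ofPred_eq, subset_univ, true_and]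
  constructor
  · intro hA C hC
    by_contra! hlt
    obtain ⟨B, hBAC, hB⟩ := exists_subset_card_eq (show t ≤ #(A ∩ C) by omega)
    exact hA B (hBAC.trans inter_subset_left)
      ⟨((h𝓜 C).1 hC).1.subset (coe_subset.2 (hBAC.trans inter_subset_right)), hB⟩
  · intro hA B hBA hB
    obtain ⟨C, hBC, hC⟩ :=
      Finite.exists_le_maximal (p := fun s : Finset V => G.IsClique (s : Set V)) hB.isClique
    have := card_le_card (subset_inter hBA hBC)
    have := hA C ((h𝓜 C).2 hC)
    rw [hB.card_eq] at *
    omega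

end BlockGraphs

/-- for `t ≥ 3` and a block graph `G`, the complex `CF_t(G)` is
`(t-2)`-decomposable and hence shellable. -/
theorem statement5 {V : Type*} [Fintype V] [DecidableEq V]
    (t : ℕ) (ht : 3 ≤ t) (G : SimpleGraph V) (hblock : IsBlockGraph G) :
    KDecomposable (t - 2) (cliqueFreeComplex G t) ∧
    IsShellable (cliqueFreeComplex G t) := by
  classical
  let 𝓜 := univ.filter fun C : Finset V => Maximal (fun s : Finset V => G.IsClique (s : Set V)) C
  have h𝓜 C : C ∈ 𝓜 ↔ Maximal (fun s : Finset V => G.IsClique (s : Set V)) C := by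
    simp [𝓜]
  have hdec : KDecomposable (t - 2) (cliqueFreeComplex G t) := by
    rw [cliqueFreeComplex_eq_meetBoundedComplex (by omega) h𝓜]
    exact kDecomposable_meetBoundedComplex (hblock.leafHereditary fun C => (h𝓜 C).1) _ _ _
  exact ⟨hdec, hdec.isShellable fun A B hBA hA C hC => hA C (hC.trans hBA)⟩
end

section
/- Let t ≥ 2 be an integer, let H be a finite simple graph, let S ⊆ V(H), and let G = Cl(H, S, t) be a clique attachment of H along S. For each v ∈ S choose a subset σ_v ⊆ V(K_v) ∖ {v} with |σ_v| = t − 1, and set σ = ⋃_{v ∈ S} σ_v. Then σ is a face of CF_t(G), and the link of σ in CF_t(G) equals the t-clique-free complex of the induced subgraph of H on V(H) ∖ S: link_{CF_t(G)}(σ) = CF_t(H ∖ S). -/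
/-- The `t`-clique-free complex of the induced subgraph of `G` on a vertex subset `U`
(as a complex on the ambient vertex type). -/
def cliqueFreeComplexOn {V : Type*} (G : SimpleGraph V) (U : Set V) (t : ℕ) :
    Set (Finset V) :=
  {A : Finset V | ↑A ⊆ U ∧ ∀ B ⊆ A, ¬ G.IsNClique t B}

/-- The data of a clique attachment `G = Cl(H, S, t)`: `G` is a graph on the ambient
vertex type, `VH` is the vertex set of `H` (so that `H` is the induced subgraph of `G`
on `VH`; no new edges are added between vertices of `H`), `S ⊆ VH`, and for each
`v ∈ S`, `K v` is the vertex set of the clique attached at `v`: it contains `v`, has at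
least `t` vertices, its other vertices are new and pairwise disjoint from the other
attached cliques, and each new vertex is adjacent exactly to the other vertices of
its clique. -/
structure IsCliqueAttachment {V : Type*} [DecidableEq V] (G : SimpleGraph V)
    (VH S : Finset V) (K : V → Finset V) (t : ℕ) : Prop where
  subset : S ⊆ VH
  cover : ∀ w : V, w ∈ VH ∨ ∃ v ∈ S, w ∈ K v
  mem_self : ∀ v ∈ S, v ∈ K v
  card_ge : ∀ v ∈ S, t ≤ (K v).card
  new_vertices : ∀ v ∈ S, ∀ w ∈ K v, w ≠ v → w ∉ VH
  pairwise_disjoint : ∀ u ∈ S, ∀ v ∈ S, u ≠ v → Disjoint (K u) (K v)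
  clique : ∀ v ∈ S, G.IsClique ↑(K v)
  adj_new : ∀ v ∈ S, ∀ w ∈ K v, w ∉ VH → ∀ u : V, G.Adj w u ↔ (u ∈ K v ∧ u ≠ w)

/-!
A clique of `G` containing a new vertex of `K v` lies inside `K v`. Hence a `t`-clique
meeting `σ` inside `σ ∪ (VH \ S)` would lie in `σ v`, which has only `t - 1` vertices:
so `σ` is a face, and so is `F ∪ σ` for every face `F` of `CF_t(H ∖ S)`. Conversely, a
vertex `w` of a face `F` of the link that lay in some `K v` (that is, `w ∉ VH` or
`w ∈ S`) would complete `σ v` to the `t`-clique `insert w (σ v)` inside `F ∪ σ`.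
-/

namespace IsCliqueAttachment

variable {V : Type*} [DecidableEq V] {G : SimpleGraph V} {VH S : Finset V}
  {K : V → Finset V} {t : ℕ} {σ : V → Finset V}

theorem subset_of_isClique (hG : IsCliqueAttachment G VH S K t) {B : Finset V}
    (hB : G.IsClique (B : Set V)) {v w : V} (hv : v ∈ S) (hwB : w ∈ B) (hwK : w ∈ K v)
    (hwVH : w ∉ VH) : B ⊆ K v := by
  intro u hu
  obtain rfl | hne := eq_or_ne u w
  · exact hwK
  · exact ((hG.adj_new v hv w hwK hwVH u).1 (hB hwB hu hne.symm)).1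

theorem notMem_of_mem_biUnion (hG : IsCliqueAttachment G VH S K t)
    (hσ : ∀ v ∈ S, σ v ⊆ (K v).erase v) {w : V} (hw : w ∈ S.biUnion σ) : w ∉ VH := by
  obtain ⟨v, hv, hwv⟩ := Finset.mem_biUnion.1 hw
  obtain ⟨hwv, hwK⟩ := Finset.mem_erase.1 (hσ v hv hwv)
  exact hG.new_vertices v hv w hwK hwv

theorem mem_of_mem_biUnion_of_mem (hG : IsCliqueAttachment G VH S K t)
    (hσ : ∀ v ∈ S, σ v ⊆ (K v).erase v) {v w : V} (hv : v ∈ S) (hw : w ∈ S.biUnion σ)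
    (hwK : w ∈ K v) : w ∈ σ v := by
  obtain ⟨u, hu, hwu⟩ := Finset.mem_biUnion.1 hw
  obtain rfl | huv := eq_or_ne u v
  · exact hwu
  · have hwKu := Finset.mem_of_mem_erase (hσ u hu hwu)
    exact absurd hwK (Finset.disjoint_left.1 (hG.pairwise_disjoint u hu v hv huv) hwKu)

theorem disjoint_sdiff (hG : IsCliqueAttachment G VH S K t) {v : V} (hv : v ∈ S) :
    Disjoint (VH \ S) (K v) := by
  refine Finset.disjoint_left.2 fun x hx hxK => ?_
  obtain ⟨hxVH, hxS⟩ := Finset.mem_sdiff.1 hx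
  obtain rfl | hxv := eq_or_ne x v
  · exact hxS hv
  · exact hG.new_vertices v hv x hxK hxv hxVH

theorem exists_subset_of_isClique (hG : IsCliqueAttachment G VH S K t)
    (hσ : ∀ v ∈ S, σ v ⊆ (K v).erase v) {X B : Finset V} (hX : X ⊆ VH \ S)
    (hB : G.IsClique (B : Set V)) (hBX : B ⊆ X ∪ S.biUnion σ) {w : V} (hwB : w ∈ B)
    (hw : w ∈ S.biUnion σ) : ∃ v ∈ S, B ⊆ σ v := by
  obtain ⟨v, hv, hwv⟩ := Finset.mem_biUnion.1 hw
  have hBK : B ⊆ K v := hG.subset_of_isClique hB hv hwB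
    (Finset.mem_of_mem_erase (hσ v hv hwv)) (hG.notMem_of_mem_biUnion hσ hw)
  refine ⟨v, hv, fun x hx => ?_⟩
  rcases Finset.mem_union.1 (hBX hx) with hxX | hxσ
  · exact (Finset.disjoint_left.1 (hG.disjoint_sdiff hv) (hX hxX) (hBK hx)).elim
  · exact hG.mem_of_mem_biUnion_of_mem hσ hv hxσ (hBK hx)

theorem not_isNClique_of_mem_biUnion (hG : IsCliqueAttachment G VH S K t)
    (hσ : ∀ v ∈ S, σ v ⊆ (K v).erase v ∧ (σ v).card = t - 1) {X B : Finset V}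
    (hX : X ⊆ VH \ S) (hBX : B ⊆ X ∪ S.biUnion σ) {w : V} (hwB : w ∈ B)
    (hw : w ∈ S.biUnion σ) : ¬ G.IsNClique t B := by
  intro hB
  obtain ⟨v, hv, hBv⟩ :=
    hG.exists_subset_of_isClique (fun v hv => (hσ v hv).1) hX hB.isClique hBX hwB hw
  have hcard := Finset.card_le_card hBv
  rw [hB.card_eq, (hσ v hv).2] at hcard
  have : 0 < t := hB.card_eq ▸ Finset.card_pos.2 ⟨w, hwB⟩
  omega

theorem isNClique_insert (hG : IsCliqueAttachment G VH S K t) (ht : 0 < t)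
    (hσ : ∀ v ∈ S, σ v ⊆ (K v).erase v ∧ (σ v).card = t - 1) {v w : V} (hv : v ∈ S)
    (hwK : w ∈ K v) (hwσ : w ∉ σ v) : G.IsNClique t (insert w (σ v)) := by
  refine ⟨(hG.clique v hv).subset ?_, ?_⟩
  · rw [Finset.coe_insert, Set.insert_subset_iff]
    exact ⟨hwK, fun x hx => Finset.mem_of_mem_erase ((hσ v hv).1 hx)⟩
  · rw [Finset.card_insert_of_notMem hwσ, (hσ v hv).2]
    omega

theorem biUnion_mem_cliqueFreeComplex (hG : IsCliqueAttachment G VH S K t) (ht : 0 < t)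
    (hσ : ∀ v ∈ S, σ v ⊆ (K v).erase v ∧ (σ v).card = t - 1) :
    S.biUnion σ ∈ cliqueFreeComplex G t := by
  intro B hB hBt
  obtain ⟨w, hw⟩ : B.Nonempty := Finset.card_pos.1 (hBt.card_eq ▸ ht)
  refine hG.not_isNClique_of_mem_biUnion hσ (Finset.empty_subset _) ?_ hw (hB hw) hBt
  rwa [Finset.empty_union]

theorem subset_sdiff_of_mem_linkC (hG : IsCliqueAttachment G VH S K t) (ht : 0 < t)
    (hσ : ∀ v ∈ S, σ v ⊆ (K v).erase v ∧ (σ v).card = t - 1) {F : Finset V}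
    (hF : F ∈ linkC (cliqueFreeComplex G t) (S.biUnion σ)) : F ⊆ VH \ S := by
  obtain ⟨-, hdisj, hunion⟩ := hF
  have hnotK : ∀ w ∈ F, ∀ v ∈ S, w ∉ K v := by
    intro w hwF v hv hwK
    have hwσ : w ∉ σ v := fun h =>
      Finset.disjoint_left.1 hdisj hwF (Finset.subset_biUnion_of_mem σ hv h)
    refine hunion _ ?_ (hG.isNClique_insert ht hσ hv hwK hwσ)
    exact Finset.insert_subset (Finset.mem_union_left _ hwF)
      (Finset.subset_union_right.trans' (Finset.subset_biUnion_of_mem σ hv))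
  intro w hwF
  refine Finset.mem_sdiff.2 ⟨?_, fun hwS => hnotK w hwF w hwS (hG.mem_self w hwS)⟩
  obtain ⟨v, hv, hwK⟩ | hwVH := (hG.cover w).symm
  · exact (hnotK w hwF v hv hwK).elim
  · exact hwVH

theorem mem_linkC_of_mem_cliqueFreeComplexOn (hG : IsCliqueAttachment G VH S K t)
    (hσ : ∀ v ∈ S, σ v ⊆ (K v).erase v ∧ (σ v).card = t - 1) {F : Finset V}
    (hF : F ∈ cliqueFreeComplexOn G (↑(VH \ S)) t) :
    F ∈ linkC (cliqueFreeComplex G t) (S.biUnion σ) := by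
  obtain ⟨hFsub, hFfree⟩ := hF
  have hFsub : F ⊆ VH \ S := Finset.coe_subset.1 hFsub
  refine ⟨hFfree, Finset.disjoint_left.2 fun w hwF hwσ => ?_, fun B hB hBt => ?_⟩
  · exact hG.notMem_of_mem_biUnion (fun v hv => (hσ v hv).1) hwσ
      (Finset.mem_sdiff.1 (hFsub hwF)).1
  · by_cases hmeet : ∃ w ∈ B, w ∈ S.biUnion σ
    · obtain ⟨w, hwB, hwσ⟩ := hmeet
      exact hG.not_isNClique_of_mem_biUnion hσ hFsub hB hwB hwσ hBt
    · simp only [not_exists, not_and] at hmeet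
      refine hFfree B (fun x hx => ?_) hBt
      exact (Finset.mem_union.1 (hB hx)).resolve_right (hmeet x hx)

end IsCliqueAttachment

theorem statement7_general {V : Type*} [DecidableEq V]
    (t : ℕ) (ht : 2 ≤ t) (G : SimpleGraph V) (VH S : Finset V) (K : V → Finset V)
    (hG : IsCliqueAttachment G VH S K t)
    (σ : V → Finset V)
    (hσ : ∀ v ∈ S, σ v ⊆ (K v).erase v ∧ (σ v).card = t - 1) :
    S.biUnion σ ∈ cliqueFreeComplex G t ∧
    linkC (cliqueFreeComplex G t) (S.biUnion σ) =
      cliqueFreeComplexOn G (↑(VH \ S)) t := by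
  have htpos : 0 < t := by omega
  refine ⟨hG.biUnion_mem_cliqueFreeComplex htpos hσ, Set.Subset.antisymm (fun F hF => ?_)
    (fun F hF => hG.mem_linkC_of_mem_cliqueFreeComplexOn hσ hF)⟩
  exact ⟨Finset.coe_subset.2 (hG.subset_sdiff_of_mem_linkC htpos hσ hF), hF.1⟩

/-- for `G = Cl(H, S, t)` and `σ = ⋃_{v ∈ S} σ v` where each
`σ v ⊆ K v ∖ {v}` has `t - 1` elements, the set `σ` is a face of `CF_t(G)` and
`link_{CF_t(G)}(σ) = CF_t(H ∖ S)`. -/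
theorem statement7 {V : Type*} [Fintype V] [DecidableEq V]
    (t : ℕ) (ht : 2 ≤ t) (G : SimpleGraph V) (VH S : Finset V) (K : V → Finset V)
    (hG : IsCliqueAttachment G VH S K t)
    (σ : V → Finset V)
    (hσ : ∀ v ∈ S, σ v ⊆ (K v).erase v ∧ (σ v).card = t - 1) :
    S.biUnion σ ∈ cliqueFreeComplex G t ∧
    linkC (cliqueFreeComplex G t) (S.biUnion σ) =
      cliqueFreeComplexOn G (↑(VH \ S)) t :=
  statement7_general t ht G VH S K hG σ hσ
end

section
/- Let n ≥ 3 and t ≥ 3 be integers with t > ⌈n/2⌉, and let G_{n,t} be the graph obtained from the complete graph K_n by attaching a (t−2)-set of new vertices to each consecutive pair y_i, y_{i+1}. Let σ = {x_{i,j} : 1 ≤ i ≤ n, 1 ≤ j ≤ t−2} be the set of all newly added vertices. Then σ is a face of the t-clique-free complex CF_t(G_{n,t}), and the link of σ in CF_t(G_{n,t}) equals the independence complex of the n-cycle on y_1, …, y_n: link_{CF_t(G_{n,t})}(σ) = ind(C_n). -/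
/-- The defining relation of the graph `G_{n,t}`: the `y` vertices (`Sum.inl`) form
the complete graph `K_n`, and for each `i` the set `{y_i, y_{i+1}, x_{i,1}, …,
x_{i,t-2}}` is a clique (indices of `y` taken modulo `n`). -/
def gntRel (n t : ℕ) :
    (Fin n ⊕ Fin n × Fin (t - 2)) → (Fin n ⊕ Fin n × Fin (t - 2)) → Prop
  | Sum.inl a, Sum.inl b => a ≠ b
  | Sum.inl a, Sum.inr p => a = p.1 ∨ (a : ℕ) = ((p.1 : ℕ) + 1) % n
  | Sum.inr p, Sum.inl a => a = p.1 ∨ (a : ℕ) = ((p.1 : ℕ) + 1) % n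
  | Sum.inr p, Sum.inr q => p.1 = q.1 ∧ p.2 ≠ q.2

/-- The graph `G_{n,t}` obtained from `K_n` by attaching, for each `i`, a set of
`t - 2` new vertices forming a clique together with `y_i` and `y_{i+1}`. -/
def gntGraph (n t : ℕ) : SimpleGraph (Fin n ⊕ Fin n × Fin (t - 2)) :=
  SimpleGraph.fromRel (gntRel n t)

/-- The independence complex of a graph. -/
def indComplex {V : Type*} (G : SimpleGraph V) : Set (Finset V) :=
  {A : Finset V | ∀ a ∈ A, ∀ b ∈ A, ¬ G.Adj a b}

open Finset SimpleGraph

section Adjacency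

variable {n t : ℕ}

theorem gntGraph_adj_inl_inl {a b : Fin n} :
    (gntGraph n t).Adj (.inl a) (.inl b) ↔ a ≠ b := by
  simp only [gntGraph, fromRel_adj, ne_eq, Sum.inl.injEq, gntRel, and_iff_left_iff_imp]
  tauto

theorem gntGraph_adj_inr_inr {p q : Fin n × Fin (t - 2)} :
    (gntGraph n t).Adj (.inr p) (.inr q) ↔ p.1 = q.1 ∧ p.2 ≠ q.2 := by
  simp only [gntGraph, fromRel_adj, ne_eq, Sum.inr.injEq, Prod.ext_iff, not_and, gntRel]
  grind

theorem gntGraph_adj_inl_inr {m : ℕ} {a : Fin (m + 2)} {p : Fin (m + 2) × Fin (t - 2)} :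
    (gntGraph (m + 2) t).Adj (.inl a) (.inr p) ↔ a = p.1 ∨ a = p.1 + 1 := by
  simp [gntGraph, gntRel, Fin.ext_iff, Fin.val_add]

end Adjacency

section Blocks

variable {m t : ℕ}

def gntBlock (t : ℕ) (i : Fin (m + 2)) : Finset (Fin (m + 2) ⊕ Fin (m + 2) × Fin (t - 2)) :=
  insert (.inl i) (insert (.inl (i + 1)) (univ.image fun j => .inr (i, j)))

theorem card_gntBlock (ht : 2 ≤ t) (i : Fin (m + 2)) : #(gntBlock t i) = t := by
  have hi : i ≠ i + 1 := by simp
  rw [gntBlock, card_insert_of_notMem (by simp [hi]), card_insert_of_notMem (by simp),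
    card_image_of_injective _ (fun j k h => by simpa using h), card_univ, Fintype.card_fin]
  omega

theorem isClique_gntBlock (i : Fin (m + 2)) : (gntGraph (m + 2) t).IsClique (gntBlock t i) := by
  simp only [gntBlock, coe_insert, coe_image, coe_univ, Set.image_univ, isClique_insert,
    Set.mem_insert_iff, Set.mem_range]
  refine ⟨⟨?_, ?_⟩, ?_⟩
  · rintro _ ⟨j, rfl⟩ _ ⟨k, rfl⟩ hjk
    exact gntGraph_adj_inr_inr.2 ⟨rfl, fun h => hjk (congrArg (fun j => Sum.inr (i, j)) h)⟩
  · rintro _ ⟨j, rfl⟩ -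
    exact gntGraph_adj_inl_inr.2 (.inr rfl)
  · rintro _ (rfl | ⟨j, rfl⟩) -
    · exact gntGraph_adj_inl_inl.2 (by simp)
    · exact gntGraph_adj_inl_inr.2 (.inl rfl)

theorem subset_gntBlock_of_isClique {B : Finset (Fin (m + 2) ⊕ Fin (m + 2) × Fin (t - 2))}
    (hB : (gntGraph (m + 2) t).IsClique (B : Set _)) {p : Fin (m + 2) × Fin (t - 2)}
    (hp : .inr p ∈ B) : B ⊆ gntBlock t p.1 := by
  intro v hv
  obtain rfl | hne := eq_or_ne v (.inr p)
  · simp [gntBlock]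
  have hadj := hB hv hp hne
  rcases v with a | q
  · rcases gntGraph_adj_inl_inr.1 hadj with rfl | rfl <;> simp [gntBlock]
  · simpa [gntBlock] using ⟨q.2, Prod.ext (gntGraph_adj_inr_inr.1 hadj).1.symm rfl⟩

theorem card_lt_of_isClique_of_inr_mem (ht : 2 ≤ t)
    {B : Finset (Fin (m + 2) ⊕ Fin (m + 2) × Fin (t - 2))}
    (hB : (gntGraph (m + 2) t).IsClique (B : Set _)) {p : Fin (m + 2) × Fin (t - 2)}
    (hp : .inr p ∈ B) (hy : .inl p.1 ∉ B ∨ .inl (p.1 + 1) ∉ B) : #B < t := by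
  obtain ⟨y, hy_mem, hyB⟩ : ∃ y ∈ gntBlock t p.1, y ∉ B := by
    rcases hy with h | h <;> exact ⟨_, by simp [gntBlock], h⟩
  calc #B ≤ #((gntBlock t p.1).erase y) :=
        card_le_card fun v hv => mem_erase.2 ⟨ne_of_mem_of_not_mem hv hyB,
          subset_gntBlock_of_isClique hB hp hv⟩
    _ < t := by rw [card_erase_of_mem hy_mem, card_gntBlock ht]; omega

end Blocks

theorem mem_cliqueFreeComplex_of_subset {V : Type*} {G : SimpleGraph V} {t : ℕ} {A B : Finset V}
    (hAB : A ⊆ B) (hB : B ∈ cliqueFreeComplex G t) : A ∈ cliqueFreeComplex G t :=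
  fun C hC => hB C (hC.trans hAB)

theorem cycleGraph_adj_add_one {m : ℕ} (a : Fin (m + 2)) : (cycleGraph (m + 2)).Adj a (a + 1) :=
  cycleGraph_adj.2 (.inr (add_sub_cancel_left a 1))

theorem two_mul_card_le_of_mem_indComplex_cycleGraph {m : ℕ} {A : Finset (Fin (m + 2))}
    (hA : A ∈ indComplex (cycleGraph (m + 2))) : 2 * #A ≤ m + 2 := by
  have hdisj : Disjoint A (A.map (addRightEmbedding 1)) := by
    simp only [Finset.disjoint_left, mem_map, addRightEmbedding_apply, not_exists, not_and]
    rintro _ ha b hb rfl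
    exact hA b hb _ ha (cycleGraph_adj_add_one b)
  calc 2 * #A = #(A ∪ A.map (addRightEmbedding 1)) := by
        rw [card_union_of_disjoint hdisj, card_map, two_mul]
    _ ≤ m + 2 := card_le_univ _ |>.trans_eq (Fintype.card_fin _)

theorem image_inl_toLeft_of_disjoint {α β : Type*} [DecidableEq α] [DecidableEq β] [Fintype β]
    {F : Finset (α ⊕ β)} (hF : Disjoint F (univ.image .inr)) : F.toLeft.image .inl = F := by
  ext (a | b)
  · simp
  · simpa using disjoint_right.1 hF (mem_image_of_mem _ (mem_univ b))

section Link

variable {m t : ℕ}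

theorem image_inr_mem_cliqueFreeComplex (ht : 2 ≤ t) :
    (univ.image .inr : Finset (Fin (m + 2) ⊕ Fin (m + 2) × Fin (t - 2))) ∈
      cliqueFreeComplex (gntGraph (m + 2) t) t := by
  intro B hB hBt
  obtain ⟨v, hv⟩ : B.Nonempty := card_pos.1 (by rw [hBt.card_eq]; omega)
  obtain ⟨p, -, rfl⟩ := mem_image.1 (hB hv)
  exact (card_lt_of_isClique_of_inr_mem ht hBt.isClique hv
    (.inl fun h => by simpa using hB h)).ne hBt.card_eq

theorem image_inl_union_image_inr_mem_cliqueFreeComplex (ht : 2 ≤ t) (hmt : (m + 2) / 2 < t)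
    {A : Finset (Fin (m + 2))} (hA : A ∈ indComplex (cycleGraph (m + 2))) :
    A.image .inl ∪ univ.image .inr ∈ cliqueFreeComplex (gntGraph (m + 2) t) t := by
  intro B hB hBt
  refine hBt.card_eq.not_lt ?_
  have inl_mem : ∀ {a}, .inl a ∈ B → a ∈ A := fun h => by simpa using hB h
  by_cases hx : ∃ p, .inr p ∈ B
  · obtain ⟨p, hp⟩ := hx
    refine card_lt_of_isClique_of_inr_mem ht hBt.isClique hp (not_and_or.1 fun ⟨h₀, h₁⟩ => ?_)
    exact hA _ (inl_mem h₀) _ (inl_mem h₁) (cycleGraph_adj_add_one _)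
  · have hBA : B ⊆ A.image .inl := by
      rintro (a | p) hv
      · exact mem_image_of_mem _ (inl_mem hv)
      · exact absurd ⟨p, hv⟩ hx
    have := two_mul_card_le_of_mem_indComplex_cycleGraph hA
    calc #B ≤ #(A.image Sum.inl) := card_le_card hBA
      _ ≤ #A := card_image_le
      _ < t := by omega

theorem mem_indComplex_of_image_inl_union_mem (ht : 2 ≤ t) {A : Finset (Fin (m + 2))}
    (hA : A.image .inl ∪ univ.image .inr ∈ cliqueFreeComplex (gntGraph (m + 2) t) t) :
    A ∈ indComplex (cycleGraph (m + 2)) := by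
  have add_one_notMem : ∀ i ∈ A, i + 1 ∉ A := fun i hi hi₁ =>
    hA (gntBlock t i) (by simp [gntBlock, hi, hi₁, subset_iff])
      ⟨isClique_gntBlock i, card_gntBlock ht i⟩
  intro a ha b hb hab
  rcases cycleGraph_adj.1 hab with h | h <;> rw [sub_eq_iff_eq_add'] at h
  · exact add_one_notMem b hb (h ▸ ha)
  · exact add_one_notMem a ha (h ▸ hb)

end Link

/-- for `n ≥ 3`, `t ≥ 3` with `t > ⌈n/2⌉`, the set `σ` of all newly
added vertices of `G_{n,t}` is a face of `CF_t(G_{n,t})`, and the link of `σ` in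
`CF_t(G_{n,t})` is the independence complex of the `n`-cycle on `y_1, …, y_n`
(identified with the `Sum.inl` vertices). -/
theorem statement12 (n t : ℕ) (hn : 3 ≤ n) (ht : 3 ≤ t) (htn : (n + 1) / 2 < t) :
    (Finset.univ.image Sum.inr : Finset (Fin n ⊕ Fin n × Fin (t - 2))) ∈
        cliqueFreeComplex (gntGraph n t) t ∧
    linkC (cliqueFreeComplex (gntGraph n t) t) (Finset.univ.image Sum.inr) =
      (fun A : Finset (Fin n) => A.image Sum.inl) ''
        indComplex (SimpleGraph.cycleGraph n) := by
  obtain ⟨m, rfl⟩ : ∃ m, n = m + 2 := ⟨n - 2, by omega⟩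
  have ht₂ : 2 ≤ t := by omega
  refine ⟨image_inr_mem_cliqueFreeComplex ht₂, Set.ext fun F => ⟨?_, ?_⟩⟩
  · rintro ⟨-, hF, hFσ⟩
    rw [← image_inl_toLeft_of_disjoint hF] at hFσ ⊢
    exact ⟨F.toLeft, mem_indComplex_of_image_inl_union_mem ht₂ hFσ, rfl⟩
  · rintro ⟨A, hA, rfl⟩
    have hAσ := image_inl_union_image_inr_mem_cliqueFreeComplex ht₂ (by omega) hA
    exact ⟨mem_cliqueFreeComplex_of_subset subset_union_left hAσ,
      Finset.disjoint_left.2 (by simp), hAσ⟩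
end

section
/- Let G be a finite simple graph with a clique vertex-partition Π = {W_1, …, W_p}, and let t ≥ 2 be an integer. Then the t-clique-free complex of the t-clique whiskering G(Π, t) has dimension dim(CF_t(G(Π, t))) = p(t−1) − 1. -/
/-- A clique vertex-partition of `G`: a family `W 1, …, W p` of pairwise disjoint
(possibly empty) cliques of `G` whose union is `V(G)`. -/
structure IsCliqueVertexPartition {V : Type*} (G : SimpleGraph V) {p : ℕ}
    (W : Fin p → Finset V) : Prop where
  disjoint : ∀ i j, i ≠ j → Disjoint (W i) (W j)
  cover : ∀ v : V, ∃ i, v ∈ W i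
  clique : ∀ i, G.IsClique ↑(W i)

/-- The defining relation of the `t`-clique whiskering `G(Π, t)`: keep the edges of
`G` and, for each part `W i`, make `W i` together with the `t - 1` new vertices
`x_{i,1}, …, x_{i,t-1}` (`Sum.inr (i, k)`) into a clique. -/
def whiskerRel {V : Type*} (G : SimpleGraph V) {p : ℕ} (W : Fin p → Finset V)
    (t : ℕ) : (V ⊕ Fin p × Fin (t - 1)) → (V ⊕ Fin p × Fin (t - 1)) → Prop
  | Sum.inl a, Sum.inl b => G.Adj a b
  | Sum.inl a, Sum.inr q => a ∈ W q.1
  | Sum.inr q, Sum.inl a => a ∈ W q.1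
  | Sum.inr q, Sum.inr r => q.1 = r.1

/-- The `t`-clique whiskering `G(Π, t)` of `G` with respect to the clique
vertex-partition `Π = {W 1, …, W p}`. -/
def whiskerGraph {V : Type*} (G : SimpleGraph V) {p : ℕ} (W : Fin p → Finset V)
    (t : ℕ) : SimpleGraph (V ⊕ Fin p × Fin (t - 1)) :=
  SimpleGraph.fromRel (whiskerRel G W t)

open Finset

theorem card_le_of_mem_cliqueFreeComplex {α ι : Type*} [Fintype ι] {G : SimpleGraph α}
    {f : α → ι} (hf : ∀ i, G.IsClique (f ⁻¹' {i})) {n : ℕ} {F : Finset α}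
    (hF : F ∈ cliqueFreeComplex G n) : #F ≤ Fintype.card ι * (n - 1) := by
  classical
  by_contra! hlt
  obtain ⟨i, -, hi⟩ := exists_lt_card_fiber_of_mul_lt_card_of_maps_to
    (f := f) (t := univ) (fun _ _ => mem_univ _) (by simpa using hlt)
  obtain ⟨B, hB, hBcard⟩ := exists_subset_card_eq (s := {x ∈ F | f x = i}) (n := n) (by omega)
  refine hF B (hB.trans (filter_subset _ _)) ⟨(hf i).subset fun x hx => ?_, hBcard⟩
  exact (mem_filter.1 (hB hx)).2

section Whiskering

variable {V : Type*} {G : SimpleGraph V} {p t : ℕ} {W : Fin p → Finset V}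

theorem whiskerGraph_adj_inr_inr {q r : Fin p × Fin (t - 1)} :
    (whiskerGraph G W t).Adj (.inr q) (.inr r) ↔ q ≠ r ∧ q.1 = r.1 := by
  simp [whiskerGraph, whiskerRel, eq_comm]

theorem whiskerGraph_isClique_preimage (hW : ∀ i, G.IsClique (W i)) {c : V → Fin p}
    (hc : ∀ v, v ∈ W (c v)) (i : Fin p) :
    (whiskerGraph G W t).IsClique (Sum.elim c Prod.fst ⁻¹' {i}) := by
  rintro (a | q) ha (b | r) hb hne <;>
    simp only [Set.mem_preimage, Set.mem_singleton_iff, Sum.elim_inl, Sum.elim_inr] at ha hb <;>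
    subst ha <;>
    refine (SimpleGraph.fromRel_adj _ _ _).2 ⟨hne, Or.inl ?_⟩
  · exact hW _ (hc a) (hb ▸ hc b) (fun h => hne (h ▸ rfl))
  · exact show a ∈ W r.1 from hb ▸ hc a
  · exact show b ∈ W q.1 from hb ▸ hc b
  · exact hb.symm

theorem whiskerGraph_map_inr_mem_cliqueFreeComplex (ht : 1 ≤ t) :
    univ.map .inr ∈ cliqueFreeComplex (whiskerGraph G W t) t := by
  intro B hB hBc
  have hB_le : #B ≤ #(range (t - 1)) := by
    refine card_le_card_of_injOn (t := range (t - 1))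
      (Sum.elim (fun _ => 0) (fun q : Fin p × Fin (t - 1) => (q.2 : ℕ))) ?_ ?_
    · intro x hx
      obtain ⟨q, -, rfl⟩ := mem_map.1 (hB hx)
      simp
    · intro x hx y hy hxy
      obtain ⟨q, -, rfl⟩ := mem_map.1 (hB hx)
      obtain ⟨r, -, rfl⟩ := mem_map.1 (hB hy)
      by_contra hne
      have hqr := whiskerGraph_adj_inr_inr.1 (hBc.1 hx hy hne)
      exact hqr.1 (Prod.ext hqr.2 (Fin.ext hxy))
  rw [card_range, hBc.2] at hB_le
  omega

end Whiskering

theorem statement13_general {V : Type*}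
    (G : SimpleGraph V) (p : ℕ) (W : Fin p → Finset V)
    (hPi : IsCliqueVertexPartition G W) (t : ℕ) (ht : 2 ≤ t) :
    (∃ F ∈ cliqueFreeComplex (whiskerGraph G W t) t, F.card = p * (t - 1)) ∧
    ∀ F ∈ cliqueFreeComplex (whiskerGraph G W t) t, F.card ≤ p * (t - 1) := by
  choose c hc using hPi.cover
  refine ⟨⟨univ.map .inr, whiskerGraph_map_inr_mem_cliqueFreeComplex (by omega), by simp⟩,
    fun F hF => ?_⟩
  simpa using card_le_of_mem_cliqueFreeComplex (whiskerGraph_isClique_preimage hPi.clique hc) hF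

/-- `dim CF_t(G(Π, t)) = p (t - 1) - 1`, i.e. the largest cardinality
of a face of `CF_t(G(Π, t))` is exactly `p * (t - 1)`. -/
theorem statement13 {V : Type*} [Fintype V] [DecidableEq V]
    (G : SimpleGraph V) (p : ℕ) (W : Fin p → Finset V)
    (hPi : IsCliqueVertexPartition G W) (t : ℕ) (ht : 2 ≤ t) :
    (∃ F ∈ cliqueFreeComplex (whiskerGraph G W t) t, F.card = p * (t - 1)) ∧
    ∀ F ∈ cliqueFreeComplex (whiskerGraph G W t) t, F.card ≤ p * (t - 1) :=
  statement13_general G p W hPi t ht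
end

section
/- Let G be a finite simple graph with a clique vertex-partition Π = {W_1, …, W_p}, and let t ≥ 2 be an integer. Then the t-clique-free complex CF_t(G(Π, t)) of the t-clique whiskering is pure: every facet of CF_t(G(Π, t)) has exactly p(t−1) vertices. -/
/-! A face of `CF_t(H)` meets every clique of `H` in fewer than `t` vertices. In `G(Π, t)`
the parts `W i` together with their whiskers form cliques `B i` (`whiskerBlock W t i`) that
partition the vertex set, and each whisker has all its neighbours in its own `B i`. So if a
facet `F` met some `B i` in fewer than `t - 1` vertices, it would miss a whisker `x` of `B i`,
and `F ∪ {x}` would still be a face, since any `t`-clique through `x` lies in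
`(F ∩ B i) ∪ {x}`. Hence `F` meets every `B i` in exactly `t - 1` vertices. -/

open Finset

section CliqueFreeComplex

variable {α : Type*} [DecidableEq α] {G : SimpleGraph α} {t : ℕ} {A S : Finset α}

theorem card_inter_lt_of_mem_cliqueFreeComplex (hA : A ∈ cliqueFreeComplex G t)
    (hS : G.IsClique (S : Set α)) : #(A ∩ S) < t := by
  by_contra! h
  obtain ⟨B, hBAS, hB⟩ := exists_subset_card_eq h
  exact hA B (hBAS.trans inter_subset_left)
    ⟨hS.subset (coe_subset.2 (hBAS.trans inter_subset_right)), hB⟩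

theorem insert_mem_cliqueFreeComplex {x : α} (hA : A ∈ cliqueFreeComplex G t) (hxS : x ∈ S)
    (hxN : ∀ y, G.Adj x y → y ∈ S) (hcard : #(insert x A ∩ S) < t) :
    insert x A ∈ cliqueFreeComplex G t := by
  intro B hB hBt
  by_cases hxB : x ∈ B
  · have hBS : B ⊆ insert x A ∩ S := fun y hy => by
      obtain rfl | hyx := eq_or_ne y x
      · exact mem_inter.2 ⟨hB hy, hxS⟩
      · exact mem_inter.2 ⟨hB hy, hxN y (hBt.isClique hxB hy hyx.symm)⟩
    exact (card_le_card hBS).not_gt (hBt.card_eq ▸ hcard)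
  · exact hA B (fun y hy => (mem_insert.1 (hB hy)).resolve_left (ne_of_mem_of_not_mem hy hxB))
      hBt

theorem card_inter_eq_of_mem_facets {F X : Finset α} (hF : F ∈ Facets (cliqueFreeComplex G t))
    (hS : G.IsClique (S : Set α)) (hXS : X ⊆ S) (hX : t - 1 ≤ #X)
    (hXN : ∀ x ∈ X, ∀ y, G.Adj x y → y ∈ S) : #(F ∩ S) = t - 1 := by
  have hlt := card_inter_lt_of_mem_cliqueFreeComplex hF.1 hS
  by_contra hne
  have hsmall : #(F ∩ S) < t - 1 := by omega
  obtain ⟨x, hxX, hxF⟩ : ∃ x ∈ X, x ∉ F := by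
    by_contra! hXF
    have : X ⊆ F ∩ S := fun x hx => mem_inter.2 ⟨hXF x hx, hXS hx⟩
    exact (card_le_card this).not_gt (hsmall.trans_le hX)
  have hinsert : insert x F ∈ cliqueFreeComplex G t := by
    refine insert_mem_cliqueFreeComplex hF.1 (hXS hxX) (hXN x hxX) ?_
    rw [insert_inter_of_mem (hXS hxX)]
    exact (card_insert_le _ _).trans_lt (by omega)
  exact hxF ((hF.2 _ hinsert (subset_insert x F)).symm ▸ mem_insert_self x F)

end CliqueFreeComplex

section Whiskering

variable {V : Type*} {G : SimpleGraph V} {p : ℕ} {W : Fin p → Finset V} {t : ℕ}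

def whiskerBlock (W : Fin p → Finset V) (t : ℕ) (i : Fin p) : Finset (V ⊕ Fin p × Fin (t - 1)) :=
  (W i).disjSum ({i} ×ˢ univ)

theorem whiskerGraph_adj {x y : V ⊕ Fin p × Fin (t - 1)} :
    (whiskerGraph G W t).Adj x y ↔ x ≠ y ∧ (whiskerRel G W t x y ∨ whiskerRel G W t y x) :=
  SimpleGraph.fromRel_adj _ _ _

theorem isClique_whiskerBlock {i : Fin p} (hW : G.IsClique (W i : Set V)) :
    (whiskerGraph G W t).IsClique (whiskerBlock W t i : Set (V ⊕ Fin p × Fin (t - 1))) := by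
  rintro (a | ⟨j, k⟩) hx (b | ⟨j', k'⟩) hy hxy <;>
    simp only [whiskerBlock, mem_coe, inl_mem_disjSum, inr_mem_disjSum, mem_product,
      mem_singleton, mem_univ, and_true] at hx hy <;>
    refine whiskerGraph_adj.2 ⟨hxy, Or.inl ?_⟩ <;> simp only [whiskerRel]
  · exact hW hx hy fun hab => hxy (congrArg Sum.inl hab)
  · exact hy ▸ hx
  · exact hx ▸ hy
  · exact hx.trans hy.symm

theorem mem_whiskerBlock_of_adj {q : Fin p × Fin (t - 1)} {y : V ⊕ Fin p × Fin (t - 1)}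
    (h : (whiskerGraph G W t).Adj (Sum.inr q) y) : y ∈ whiskerBlock W t q.1 := by
  obtain ⟨-, h | h⟩ := whiskerGraph_adj.1 h <;> rcases y with a | ⟨j, k⟩ <;>
    simp_all [whiskerRel, whiskerBlock, eq_comm]

theorem card_eq_sum_card_inter_whiskerBlock [DecidableEq V] (hPi : IsCliqueVertexPartition G W)
    (F : Finset (V ⊕ Fin p × Fin (t - 1))) : #F = ∑ i, #(F ∩ whiskerBlock W t i) := by
  have hdisj : (↑(univ : Finset (Fin p)) : Set (Fin p)).PairwiseDisjoint (fun i => F ∩ whiskerBlock W t i) := by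
    intro i _ j _ hij
    refine disjoint_left.2 fun x hxi hxj => ?_
    rcases x with a | ⟨k, l⟩ <;>
      simp only [whiskerBlock, mem_inter, inl_mem_disjSum, inr_mem_disjSum, mem_product,
        mem_singleton, mem_univ, and_true] at hxi hxj
    · exact disjoint_left.1 (hPi.disjoint i j hij) hxi.2 hxj.2
    · exact hij (hxi.2.symm.trans hxj.2)
  have hcover : univ.biUnion (fun i => F ∩ whiskerBlock W t i) = F := by
    refine Subset.antisymm (biUnion_subset.2 fun _ _ => inter_subset_left) fun x hx => ?_
    obtain ⟨i, hi⟩ : ∃ i, x ∈ whiskerBlock W t i := by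
      rcases x with a | ⟨k, l⟩
      · simpa [whiskerBlock] using hPi.cover a
      · exact ⟨k, by simp [whiskerBlock]⟩
    exact mem_biUnion.2 ⟨i, mem_univ i, mem_inter.2 ⟨hx, hi⟩⟩
  rw [← card_biUnion hdisj, hcover]

end Whiskering

theorem statement14_general {V : Type*}
    (G : SimpleGraph V) (p : ℕ) (W : Fin p → Finset V)
    (hPi : IsCliqueVertexPartition G W) (t : ℕ) :
    ∀ F ∈ Facets (cliqueFreeComplex (whiskerGraph G W t) t),
      F.card = p * (t - 1) := by
  classical
  intro F hF
  have hblock (i : Fin p) : #(F ∩ whiskerBlock W t i) = t - 1 := by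
    refine card_inter_eq_of_mem_facets (X := ({i} ×ˢ univ).map .inr) hF
      (isClique_whiskerBlock (hPi.clique i)) ?_ (by simp) ?_
    · rw [map_inr_subset_iff_subset_toRight, whiskerBlock, toRight_disjSum]
    · simp only [mem_map, mem_product, mem_singleton, mem_univ, and_true]
      rintro _ ⟨q, rfl, rfl⟩ y hy
      exact mem_whiskerBlock_of_adj hy
  simp [card_eq_sum_card_inter_whiskerBlock hPi F, hblock]

/-- `CF_t(G(Π, t))` is pure: every facet has exactly `p * (t - 1)`
vertices. -/
theorem statement14 {V : Type*} [Fintype V] [DecidableEq V]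
    (G : SimpleGraph V) (p : ℕ) (W : Fin p → Finset V)
    (hPi : IsCliqueVertexPartition G W) (t : ℕ) (ht : 2 ≤ t) :
    ∀ F ∈ Facets (cliqueFreeComplex (whiskerGraph G W t) t),
      F.card = p * (t - 1) :=
  statement14_general G p W hPi t
end
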